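/- Let k ≥ 3 be an integer and A ⊆ {1,…,k} with #A ≤ k/4. Define F₂ = {1 ≤ j ≤ k : j−1 ∉ Aᶜ, j ∈ Aᶜ, j+1 ∈ Aᶜ} and F₃ = {1 ≤ j ≤ k : j−1 ∈ Aᶜ, j ∈ Aᶜ, j+1 ∈ Aᶜ}, with the convention that 0 ∉ Aᶜ and k+1 ∉ Aᶜ. Then #F₂ + #F₃ ≥ k/6. -/

import Mathlib

open Finset

/-- if `k ≥ 3` and `A ⊆ {1,…,k}` with `#A ≤ k/4`, and `F₂`, `F₃` are the sets of
indices `j ∈ Aᶜ` whose predecessor is (respectively is not) in `Aᶜ` and whose successor is in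
`Aᶜ` (with the convention `0 ∉ Aᶜ`, `k+1 ∉ Aᶜ`), then `#F₂ + #F₃ ≥ k/6`. -/
theorem card_F2_add_card_F3_ge
    (k : ℕ) (hk : 3 ≤ k) (A : Finset ℕ) (hA : A ⊆ Finset.Icc 1 k)
    (hcard : (A.card : ℝ) ≤ k / 4) :
    let Ac : Finset ℕ := Finset.Icc 1 k \ A
    let F₂ : Finset ℕ := Ac.filter (fun j => (j - 1) ∉ Ac ∧ (j + 1) ∈ Ac)
    let F₃ : Finset ℕ := Ac.filter (fun j => (j - 1) ∈ Ac ∧ (j + 1) ∈ Ac)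
    (k : ℝ) / 6 ≤ (F₂.card : ℝ) + (F₃.card : ℝ) := by
  intro Ac F₂ F₃
  classical
  set G := Ac.filter (fun j => (j + 1) ∈ Ac) with hGdef
  have hF23 : F₂ ∪ F₃ = G := by
    ext j
    simp only [mem_union, mem_filter, F₂, F₃, G, hGdef]
    tauto
  have hdisj : Disjoint F₂ F₃ := by
    simp only [disjoint_left, mem_filter, F₂, F₃]
    tauto
  have hcardG : F₂.card + F₃.card = G.card := by
    rw [← card_union_of_disjoint hdisj, hF23]
  have hGD : G.card + (Ac.filter (fun j => ¬ (j + 1) ∈ Ac)).card = Ac.card :=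
    card_filter_add_card_filter_not _
  have hDle : (Ac.filter (fun j => ¬ (j + 1) ∈ Ac)).card ≤ A.card + 1 := by
    have h1 : (Ac.filter (fun j => ¬ (j + 1) ∈ Ac)).card ≤ (insert (k+1) A).card := by
      apply card_le_card_of_injOn (fun j => j + 1)
      · intro j hj
        simp only [mem_coe, mem_filter, Ac, mem_sdiff, mem_Icc] at hj
        obtain ⟨⟨⟨hj1, hjk⟩, hjA⟩, h4⟩ := hj
        simp only [mem_coe, mem_insert]
        by_cases hjek : j = k
        · left; omega
        · right
          by_contra hjA1
          exact h4 ⟨⟨by omega, by omega⟩, hjA1⟩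
      · intro a _ b _ hab
        simp only at hab
        omega
    calc (Ac.filter (fun j => ¬ (j + 1) ∈ Ac)).card ≤ _ := h1
      _ ≤ A.card + 1 := card_insert_le _ _
  have hAk : A.card ≤ k := by
    have := card_le_card hA
    simpa using this
  have hAck : Ac.card = k - A.card := by
    simp only [Ac]
    rw [card_sdiff_of_subset hA]
    simp
  have hAcR : (Ac.card : ℝ) = (k : ℝ) - A.card := by
    rw [hAck]
    push_cast [hAk]
    ring
  have hGR : (G.card : ℝ) + (Ac.filter (fun j => ¬ (j + 1) ∈ Ac)).card = (Ac.card : ℝ) := by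
    exact_mod_cast congrArg (Nat.cast : ℕ → ℝ) hGD
  have hDR : ((Ac.filter (fun j => ¬ (j + 1) ∈ Ac)).card : ℝ) ≤ (A.card : ℝ) + 1 := by
    exact_mod_cast hDle
  have hsum : (F₂.card : ℝ) + (F₃.card : ℝ) = (G.card : ℝ) := by
    exact_mod_cast congrArg (Nat.cast : ℕ → ℝ) hcardG
  have hkR : (3 : ℝ) ≤ (k : ℝ) := by exact_mod_cast hk
  rw [hsum]
  linarith
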